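/- Let H act coprimely on a finite solvable group F with C_F(h) = 1 for every nonidentity h ∈ H, and suppose F acts transitively on a finite set Ω on which F ⋊ H acts. If some point W ∈ Ω is fixed by a nonidentity element of H, then the stabilizer in F ⋊ H of some point of Ω contains a conjugate of H; in particular there is a point of Ω fixed by all of H. -/
import Mathlib


open SemidirectProduct

/-- If a nonidentity `h' : H` fixes two points of `Ω`, they are equal
(under a fixed-point-free action of `H` on `F` and transitive `F`-action). -/
private theorem uniqueFixAux
    {F H : Type*} [Group F] [Group H] [Finite F]
    {φ : H →* MulAut F}
    (hfpf : ∀ h : H, h ≠ 1 → ∀ f : F, φ h f = f → f = 1)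
    {Ω : Type*} [MulAction (F ⋊[φ] H) Ω]
    (htrans : ∀ w w' : Ω, ∃ f : F, (inl f : F ⋊[φ] H) • w = w')
    {h' : H} (hne : h' ≠ 1) {V V' : Ω}
    (hV : (inr h' : F ⋊[φ] H) • V = V) (hV' : (inr h' : F ⋊[φ] H) • V' = V') :
    V = V' := by
  obtain ⟨f, hf⟩ := htrans V V'
  set θ : F → F := fun u => u⁻¹ * φ h' u with hθ
  have hinj : Function.Injective θ := by
    intro a b hab
    simp only [hθ] at hab
    have h2 : φ h' a = a * (b⁻¹ * φ h' b) := by rw [← hab]; group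
    have h1 : φ h' (b * a⁻¹) = b * a⁻¹ := by
      rw [map_mul, map_inv, h2]; group
    have h3 := hfpf h' hne _ h1
    have : b = a := by
      have := mul_eq_one_iff_eq_inv.mp h3
      simpa using this
    exact this.symm
  have hVinv : (inr h'⁻¹ : F ⋊[φ] H) • V = V := by
    rw [map_inv]; exact inv_smul_eq_iff.mpr hV.symm
  set Fv : Subgroup F := (MulAction.stabilizer (F ⋊[φ] H) V).comap (inl : F →* F ⋊[φ] H)
    with hFv
  have hmemFv : ∀ u : F, u ∈ Fv ↔ (inl u : F ⋊[φ] H) • V = V := by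
    intro u
    rw [hFv, Subgroup.mem_comap, MulAction.mem_stabilizer_iff]
  have hphi : ∀ u : F, u ∈ Fv → φ h' u ∈ Fv := by
    intro u hu
    rw [hmemFv] at hu ⊢
    rw [inl_aut, mul_smul, mul_smul, hVinv, hu, hV]
  have hclosure : ∀ u : F, u ∈ Fv → θ u ∈ Fv := fun u hu =>
    mul_mem (inv_mem hu) (hphi u hu)
  have e1 : (inl (φ h' f) : F ⋊[φ] H) • V = V' := by
    rw [inl_aut, mul_smul, mul_smul, hVinv, hf, hV']
  have hθf : θ f ∈ Fv := by
    rw [hmemFv]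
    show (inl (f⁻¹ * φ h' f) : F ⋊[φ] H) • V = V
    rw [map_mul, mul_smul, e1, map_inv, inv_smul_eq_iff, hf]
  have hsub : (Fv : Set F) ⊆ θ ⁻¹' (Fv : Set F) := fun u hu => hclosure u hu
  have hle : (θ ⁻¹' (Fv : Set F)).ncard ≤ (Fv : Set F).ncard :=
    calc (θ ⁻¹' (Fv : Set F)).ncard = (θ '' (θ ⁻¹' (Fv : Set F))).ncard :=
          (Set.ncard_image_of_injective _ hinj).symm
      _ ≤ (Fv : Set F).ncard :=
          Set.ncard_le_ncard (Set.image_preimage_subset θ _) (Set.toFinite _)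
  have heq : (Fv : Set F) = θ ⁻¹' (Fv : Set F) :=
    Set.eq_of_subset_of_ncard_le hsub hle (Set.toFinite _)
  have hfFv : f ∈ Fv := by
    have h4 : f ∈ θ ⁻¹' (Fv : Set F) := hθf
    rw [← heq] at h4
    exact h4
  have h5 : (inl f : F ⋊[φ] H) • V = V := (hmemFv f).mp hfFv
  rw [← hf, h5]

/-- If each nonidentity element of a finite group `H` acting on a finite set `Ω`
fixes at most one point, then any two points with nontrivial stabilizer lie in the
same orbit. -/
private theorem orbitMemAux
    {H Ω : Type*} [Group H] [Finite H] [Finite Ω] [MulAction H Ω]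
    (huniq : ∀ k : H, k ≠ 1 → ∀ x y : Ω, k • x = x → k • y = y → x = y)
    (x₀ y₀ : Ω)
    (hx : ∃ k : H, k ≠ 1 ∧ k • x₀ = x₀) (hy : ∃ k : H, k ≠ 1 ∧ k • y₀ = y₀) :
    y₀ ∈ MulAction.orbit H x₀ := by
  classical
  by_contra hmem
  letI := Fintype.ofFinite H
  letI := Fintype.ofFinite Ω
  have hdisj : ∀ v : Ω, v ∈ MulAction.orbit H x₀ → v ∈ MulAction.orbit H y₀ → False := by
    intro v h1 h2
    have e : MulAction.orbit H x₀ = MulAction.orbit H y₀ :=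
      (MulAction.orbit_eq_iff.mpr h1).symm.trans (MulAction.orbit_eq_iff.mpr h2)
    exact hmem (by rw [e]; exact MulAction.mem_orbit_self y₀)
  set P : Ω → Finset (H × Ω) := fun z =>
    Finset.univ.filter fun p : H × Ω => p.1 ≠ 1 ∧ p.1 • p.2 = p.2 ∧ p.2 ∈ MulAction.orbit H z
    with hP
  have horbstab : ∀ z : Ω, (MulAction.orbit H z).toFinset.card *
      Nat.card (MulAction.stabilizer H z) = Fintype.card H := by
    intro z
    rw [Set.toFinset_card, Nat.card_eq_fintype_card]
    exact MulAction.card_orbit_mul_card_stabilizer_eq_card_group H z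
  have key : ∀ z : Ω, (P z).card + (MulAction.orbit H z).toFinset.card = Fintype.card H := by
    intro z
    set O : Finset Ω := (MulAction.orbit H z).toFinset with hO
    have hfib : ∀ p ∈ P z, p.2 ∈ O := by
      intro p hp
      simp only [hP, Finset.mem_filter, Finset.mem_univ, true_and] at hp
      rw [hO, Set.mem_toFinset]
      exact hp.2.2
    have hcardsum : (P z).card = ∑ x ∈ O, ((P z).filter fun p => p.2 = x).card :=
      Finset.card_eq_sum_card_fiberwise hfib
    have hstab : ∀ x ∈ O, Nat.card (MulAction.stabilizer H x)
        = Nat.card (MulAction.stabilizer H z) := by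
      intro x hxO
      rw [hO, Set.mem_toFinset] at hxO
      obtain ⟨g, hg⟩ := hxO
      rw [← hg, MulAction.stabilizer_smul_eq_stabilizer_map_conj]
      exact (Nat.card_congr (Subgroup.equivMapOfInjective _ _
        (MulEquiv.injective (MulAut.conj g))).toEquiv).symm
    have hfibcard : ∀ x ∈ O, ((P z).filter fun p => p.2 = x).card + 1
        = Nat.card (MulAction.stabilizer H x) := by
      intro x hxO
      have hxorb : x ∈ MulAction.orbit H z := by rwa [hO, Set.mem_toFinset] at hxO
      have himg : (P z).filter (fun p => p.2 = x)
          = (Finset.univ.filter fun k : H => k ≠ 1 ∧ k • x = x).image fun k => (k, x) := by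
        ext p
        simp only [hP, Finset.mem_filter, Finset.mem_image, Finset.mem_univ, true_and]
        constructor
        · rintro ⟨⟨hp1, hp2, _⟩, hp4⟩
          subst hp4
          exact ⟨p.1, ⟨hp1, hp2⟩, rfl⟩
        · rintro ⟨k, ⟨hk1, hk2⟩, rfl⟩
          exact ⟨⟨hk1, hk2, hxorb⟩, rfl⟩
      have hset : (Finset.univ.filter fun k : H => k ≠ 1 ∧ k • x = x)
          = (Finset.univ.filter fun k : H => k • x = x).erase 1 := by
        ext k
        simp only [Finset.mem_filter, Finset.mem_erase, Finset.mem_univ, true_and]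
        try tauto
      have hone : (1 : H) ∈ Finset.univ.filter fun k : H => k • x = x := by simp
      have hcard1 : (Finset.univ.filter fun k : H => k • x = x).card
          = Nat.card (MulAction.stabilizer H x) := by
        rw [Nat.card_eq_fintype_card, ← Fintype.card_subtype]
        exact Fintype.card_congr (Equiv.subtypeEquivRight fun k =>
          (MulAction.mem_stabilizer_iff).symm)
      rw [himg, Finset.card_image_of_injective _
        (fun a b hab => (Prod.ext_iff.mp hab).1), hset,
        Finset.card_erase_of_mem hone, Nat.sub_add_cancel
          (Finset.card_pos.mpr ⟨1, hone⟩), hcard1]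
    have hsum : (P z).card + O.card = ∑ x ∈ O, (((P z).filter fun p => p.2 = x).card + 1) := by
      rw [Finset.sum_add_distrib, ← hcardsum, Finset.sum_const, smul_eq_mul, mul_one]
    rw [hsum, Finset.sum_congr rfl fun x hx => (hfibcard x hx).trans (hstab x hx),
      Finset.sum_const, smul_eq_mul]
    exact horbstab z
  have hbound : ∀ z : Ω, (∃ k : H, k ≠ 1 ∧ k • z = z) →
      1 ≤ (MulAction.orbit H z).toFinset.card ∧
      2 * (MulAction.orbit H z).toFinset.card ≤ Fintype.card H := by
    rintro z ⟨k, hk1, hk2⟩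
    have h1 : z ∈ (MulAction.orbit H z).toFinset := by
      rw [Set.mem_toFinset]; exact MulAction.mem_orbit_self z
    refine ⟨Finset.card_pos.mpr ⟨z, h1⟩, ?_⟩
    have hnt : Nontrivial (MulAction.stabilizer H z) :=
      ⟨⟨k, hk2⟩, 1, by simp [Subtype.ext_iff, hk1]⟩
    have hs2 : 2 ≤ Nat.card (MulAction.stabilizer H z) := Finite.one_lt_card
    calc 2 * (MulAction.orbit H z).toFinset.card
        = (MulAction.orbit H z).toFinset.card * 2 := mul_comm _ _
      _ ≤ (MulAction.orbit H z).toFinset.card * Nat.card (MulAction.stabilizer H z) :=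
          Nat.mul_le_mul_left _ hs2
      _ = Fintype.card H := horbstab z
  obtain ⟨k₁, hk₁, hfix₁⟩ := hx
  obtain ⟨k₂, hk₂, hfix₂⟩ := hy
  have hPdisj : Disjoint (P x₀) (P y₀) := by
    rw [Finset.disjoint_left]
    intro p hp1 hp2
    simp only [hP, Finset.mem_filter, Finset.mem_univ, true_and] at hp1 hp2
    exact hdisj p.2 hp1.2.2 hp2.2.2
  have hinjOn : Set.InjOn Prod.fst ((P x₀ ∪ P y₀ : Finset (H × Ω)) : Set (H × Ω)) := by
    intro p hp q hq hpq
    rw [Finset.mem_coe, Finset.mem_union] at hp hq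
    have hp' : p.1 ≠ 1 ∧ p.1 • p.2 = p.2 := by
      rcases hp with hp | hp <;>
        · simp only [hP, Finset.mem_filter, Finset.mem_univ, true_and] at hp
          exact ⟨hp.1, hp.2.1⟩
    have hq' : q.1 ≠ 1 ∧ q.1 • q.2 = q.2 := by
      rcases hq with hq | hq <;>
        · simp only [hP, Finset.mem_filter, Finset.mem_univ, true_and] at hq
          exact ⟨hq.1, hq.2.1⟩
    have h2 : p.2 = q.2 := huniq p.1 hp'.1 p.2 q.2 hp'.2 (by rw [hpq]; exact hq'.2)
    exact Prod.ext hpq h2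
  have himage : (P x₀ ∪ P y₀).image Prod.fst ⊆ Finset.univ.erase 1 := by
    intro k hk
    rw [Finset.mem_image] at hk
    obtain ⟨p, hp, rfl⟩ := hk
    rw [Finset.mem_union] at hp
    have : p.1 ≠ 1 := by
      rcases hp with hp | hp <;>
        · simp only [hP, Finset.mem_filter, Finset.mem_univ, true_and] at hp
          exact hp.1
    exact Finset.mem_erase.mpr ⟨this, Finset.mem_univ _⟩
  have hcardle : (P x₀).card + (P y₀).card ≤ Fintype.card H - 1 :=
    calc (P x₀).card + (P y₀).card = (P x₀ ∪ P y₀).card :=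
          (Finset.card_union_of_disjoint hPdisj).symm
      _ = ((P x₀ ∪ P y₀).image Prod.fst).card := (Finset.card_image_of_injOn hinjOn).symm
      _ ≤ (Finset.univ.erase (1 : H)).card := Finset.card_le_card himage
      _ = Fintype.card H - 1 := by
          rw [Finset.card_erase_of_mem (Finset.mem_univ 1), Finset.card_univ]
  have k1 := key x₀
  have k2 := key y₀
  have b1 := hbound x₀ ⟨k₁, hk₁, hfix₁⟩
  have b2 := hbound y₀ ⟨k₂, hk₂, hfix₂⟩
  have hn : 1 ≤ Fintype.card H := Fintype.card_pos
  omega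

/-- Let `H` act coprimely and fixed-point-freely on a finite solvable group `F`, and let
the semidirect product `F ⋊ H` act on a finite set `Ω` on which `F` acts transitively.
If some point of `Ω` is fixed by a nonidentity element of `H`, then some point of `Ω`
is fixed by all of `H` (so the stabilizer of that point contains `H`). -/
theorem exists_point_fixed_by_complement
    (F H : Type*) [Group F] [Group H] [Finite F] [Finite H]
    (hFsolv : IsSolvable F)
    (φ : H →* MulAut F)
    (hcop : Nat.Coprime (Nat.card F) (Nat.card H))
    (hfpf : ∀ h : H, h ≠ 1 → ∀ f : F, φ h f = f → f = 1)
    (Ω : Type*) [Finite Ω] [MulAction (F ⋊[φ] H) Ω]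
    (htrans : ∀ w w' : Ω, ∃ f : F, (inl f : F ⋊[φ] H) • w = w')
    (W : Ω) (h : H) (hne : h ≠ 1) (hfix : (inr h : F ⋊[φ] H) • W = W) :
    ∃ W' : Ω, ∀ h' : H, (inr h' : F ⋊[φ] H) • W' = W' := by
  classical
  letI instH : MulAction H Ω := MulAction.compHom Ω (inr : H →* F ⋊[φ] H)
  have hsmul : ∀ (k : H) (x : Ω), k • x = (inr k : F ⋊[φ] H) • x := fun k x => rfl
  have huniq : ∀ k : H, k ≠ 1 → ∀ x y : Ω, k • x = x → k • y = y → x = y := by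
    intro k hk x y hxx hyy
    rw [hsmul] at hxx hyy
    exact uniqueFixAux hfpf htrans hk hxx hyy
  letI instF : MulAction F Ω := MulAction.compHom Ω (inl : F →* F ⋊[φ] H)
  haveI : MulAction.IsPretransitive F Ω := ⟨fun x y => (htrans x y).imp fun f hf => hf⟩
  have hΩdvd : Nat.card Ω ∣ Nat.card F := by
    letI := Fintype.ofFinite F
    letI := Fintype.ofFinite Ω
    rw [Nat.card_eq_fintype_card, Nat.card_eq_fintype_card]
    have hOS := MulAction.card_orbit_mul_card_stabilizer_eq_card_group F W
    have horb : MulAction.orbit F W = Set.univ := MulAction.orbit_eq_univ F W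
    have e : Fintype.card (MulAction.orbit F W) = Fintype.card Ω :=
      Fintype.card_congr ((Equiv.setCongr horb).trans (Equiv.Set.univ Ω))
    exact ⟨Fintype.card (MulAction.stabilizer F W), by rw [← hOS, e]⟩
  have hn0 : Nat.card H ≠ 0 := Nat.card_pos.ne'
  have hstabW : ∀ q : ℕ, q.Prime → q ∣ Nat.card H →
      q ^ (Nat.card H).factorization q ∣ Nat.card (MulAction.stabilizer H W) := by
    intro q hq hqn
    haveI : Fact q.Prime := ⟨hq⟩
    obtain ⟨Q⟩ : Nonempty (Sylow q H) := Sylow.nonempty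
    have hQcard : Nat.card Q = q ^ (Nat.card H).factorization q := Q.card_eq_multiplicity
    haveI hQnt : Nontrivial Q := by
      rw [← Finite.one_lt_card_iff_nontrivial, hQcard]
      exact Nat.one_lt_pow (Nat.Prime.factorization_pos_of_dvd hq hn0 hqn).ne' hq.one_lt
    have hqΩ : ¬ q ∣ Nat.card Ω := by
      intro hdvd
      have hg : q ∣ Nat.gcd (Nat.card F) (Nat.card H) := Nat.dvd_gcd (hdvd.trans hΩdvd) hqn
      rw [Nat.Coprime] at hcop
      rw [hcop] at hg
      exact hq.one_lt.ne' (Nat.dvd_one.mp hg)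
    obtain ⟨Wq, hWq⟩ := Q.isPGroup'.nonempty_fixed_point_of_prime_not_dvd_card Ω hqΩ
    have hWqfix : ∀ v : Q, (v : H) • Wq = Wq := fun v => hWq v
    obtain ⟨u, hu⟩ := exists_ne (1 : Q)
    have huH : (u : H) ≠ 1 := fun heq => hu (Subtype.ext heq)
    have hWmem : Wq ∈ MulAction.orbit H W :=
      orbitMemAux huniq W Wq ⟨h, hne, hfix⟩ ⟨(u : H), huH, hWqfix u⟩
    obtain ⟨g, hg⟩ := hWmem
    have hcardeq : Nat.card (MulAction.stabilizer H Wq)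
        = Nat.card (MulAction.stabilizer H W) := by
      rw [← hg, MulAction.stabilizer_smul_eq_stabilizer_map_conj]
      exact (Nat.card_congr (Subgroup.equivMapOfInjective _ _
        (MulEquiv.injective (MulAut.conj g))).toEquiv).symm
    have hQle : Q.toSubgroup ≤ MulAction.stabilizer H Wq := fun v hv =>
      MulAction.mem_stabilizer_iff.mpr (hWqfix ⟨v, hv⟩)
    calc q ^ (Nat.card H).factorization q = Nat.card Q := hQcard.symm
      _ ∣ Nat.card (MulAction.stabilizer H Wq) := Subgroup.card_dvd_of_le hQle
      _ = Nat.card (MulAction.stabilizer H W) := hcardeq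
  have horbW : Nat.card (MulAction.orbit H W) * Nat.card (MulAction.stabilizer H W)
      = Nat.card H := by
    letI := Fintype.ofFinite H
    letI := Fintype.ofFinite Ω
    rw [Nat.card_eq_fintype_card, Nat.card_eq_fintype_card, Nat.card_eq_fintype_card]
    exact MulAction.card_orbit_mul_card_stabilizer_eq_card_group H W
  have hc1 : Nat.card (MulAction.orbit H W) = 1 := by
    rw [Nat.eq_one_iff_not_exists_prime_dvd]
    intro p hp hpdvd
    have hpn : p ∣ Nat.card H := hpdvd.trans ⟨Nat.card (MulAction.stabilizer H W), horbW.symm⟩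
    have hfac := hstabW p hp hpn
    have hbad : p ^ ((Nat.card H).factorization p + 1) ∣ Nat.card H :=
      calc p ^ ((Nat.card H).factorization p + 1)
          = p ^ (Nat.card H).factorization p * p := pow_succ p _
        _ ∣ Nat.card (MulAction.stabilizer H W) * Nat.card (MulAction.orbit H W) :=
            mul_dvd_mul hfac hpdvd
        _ = Nat.card H := by rw [mul_comm]; exact horbW
    exact Nat.pow_succ_factorization_not_dvd hn0 hp hbad
  have hstabn : Nat.card (MulAction.stabilizer H W) = Nat.card H := by
    rw [← horbW, hc1, one_mul]
  have htop : MulAction.stabilizer H W = ⊤ := Subgroup.eq_top_of_card_eq _ hstabn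
  refine ⟨W, fun h' => ?_⟩
  have hmem : h' ∈ MulAction.stabilizer H W := htop ▸ Subgroup.mem_top h'
  exact MulAction.mem_stabilizer_iff.mp hmem
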